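/- Let v, w ∈ ℝ^N be unit vectors with ‖v vᵀ - w wᵀ‖ ≤ ε in operator norm, ε < 1/2, and suppose |w_j| ≥ m > 0 and |w_i| ≤ 1 for indices i, j. Then, after choosing the sign of v so that ⟨v, w⟩ ≥ 0, we have |v_i/v_j - w_i/w_j| ≤ C ε / m² for an absolute constant C, provided ε is small enough that |v_j| ≥ m/2. -/

import Mathlib

/-!
Applying `v vᵀ - w wᵀ` to `w` gives `⟪v, w⟫ v - w`, of squared norm `1 - ⟪v, w⟫²`. For
`0 ≤ ⟪v, w⟫ ≤ 1` this is at least `1 - ⟪v, w⟫ = ‖v - w‖² / 2`, so `‖v - w‖ ≤ √2 ε`; every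
coordinate then moves by at most `2ε`, and the ratio bound follows from
`v i / v j - w i / w j = ((v i - w i) w j + w i (w j - v j)) / (v j w j)`.
-/

/-- The ℓ²→ℓ² operator (spectral) norm of a square real matrix. -/
noncomputable def opNorm {N : ℕ} (M : Matrix (Fin N) (Fin N) ℝ) : ℝ :=
  ‖Matrix.toEuclideanCLM (𝕜 := ℝ) M‖

open Matrix WithLp
open scoped RealInnerProductSpace

section InnerProductSpace

variable {E : Type*} [NormedAddCommGroup E] [InnerProductSpace ℝ E] {v w : E}

theorem norm_inner_smul_sub_sq (hv : ‖v‖ = 1) (hw : ‖w‖ = 1) :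
    ‖⟪v, w⟫ • v - w‖ ^ 2 = 1 - ⟪v, w⟫ ^ 2 := by
  rw [norm_sub_sq_real, norm_smul, real_inner_smul_left, hv, hw, Real.norm_eq_abs, mul_one,
    sq_abs]
  ring

theorem norm_sub_le_sqrt_two_mul_norm_inner_smul_sub (hv : ‖v‖ = 1) (hw : ‖w‖ = 1)
    (hvw : 0 ≤ ⟪v, w⟫) : ‖v - w‖ ≤ √2 * ‖⟪v, w⟫ • v - w‖ := by
  have hvw_le : ⟪v, w⟫ ≤ 1 := by simpa [hv, hw] using real_inner_le_norm v w
  have hsq : ‖v - w‖ ^ 2 ≤ 2 * ‖⟪v, w⟫ • v - w‖ ^ 2 := by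
    rw [norm_sub_sq_real, norm_inner_smul_sub_sq hv hw, hv, hw]
    nlinarith
  rw [← Real.sqrt_sq (norm_nonneg (v - w)), ← Real.sqrt_sq (norm_nonneg (⟪v, w⟫ • v - w)),
    ← Real.sqrt_mul zero_le_two]
  exact Real.sqrt_le_sqrt hsq

end InnerProductSpace

namespace EuclideanSpace

variable {ι : Type*} [Fintype ι]

theorem norm_toLp_eq_one {v : ι → ℝ} (hv : ∑ k, v k ^ 2 = 1) : ‖toLp 2 v‖ = 1 := by
  rw [← pow_eq_one_iff_of_nonneg (norm_nonneg _) two_ne_zero, real_norm_sq_eq]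
  exact hv

theorem real_inner_toLp_toLp (v w : ι → ℝ) : ⟪toLp 2 v, toLp 2 w⟫ = v ⬝ᵥ w := by
  rw [inner_toLp_toLp, star_trivial, dotProduct_comm]

end EuclideanSpace

theorem Matrix.toEuclideanCLM_vecMulVec_toLp {ι : Type*} [Fintype ι] [DecidableEq ι]
    (u v x : ι → ℝ) :
    toEuclideanCLM (𝕜 := ℝ) (vecMulVec u v) (toLp 2 x) = ⟪toLp 2 v, toLp 2 x⟫ • toLp 2 u := by
  rw [toEuclideanCLM_toLp, vecMulVec_mulVec, op_smul_eq_smul,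
    EuclideanSpace.real_inner_toLp_toLp, toLp_smul]

theorem norm_toLp_sub_le_sqrt_two_mul_opNorm {N : ℕ} {v w : Fin N → ℝ}
    (hv : ∑ k, v k ^ 2 = 1) (hw : ∑ k, w k ^ 2 = 1) (hvw : 0 ≤ v ⬝ᵥ w) :
    ‖toLp 2 v - toLp 2 w‖ ≤ √2 * opNorm (vecMulVec v v - vecMulVec w w) := by
  have hv' := EuclideanSpace.norm_toLp_eq_one hv
  have hw' := EuclideanSpace.norm_toLp_eq_one hw
  have happly : toEuclideanCLM (𝕜 := ℝ) (vecMulVec v v - vecMulVec w w) (toLp 2 w) =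
      ⟪toLp 2 v, toLp 2 w⟫ • toLp 2 v - toLp 2 w := by
    rw [map_sub, _root_.sub_apply, toEuclideanCLM_vecMulVec_toLp,
      toEuclideanCLM_vecMulVec_toLp, real_inner_self_eq_norm_sq, hw', one_pow, one_smul]
  calc ‖toLp 2 v - toLp 2 w‖
      ≤ √2 * ‖⟪toLp 2 v, toLp 2 w⟫ • toLp 2 v - toLp 2 w‖ :=
        norm_sub_le_sqrt_two_mul_norm_inner_smul_sub hv' hw'
          (by rwa [EuclideanSpace.real_inner_toLp_toLp])
    _ ≤ √2 * opNorm (vecMulVec v v - vecMulVec w w) := by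
        rw [← happly]
        gcongr
        simpa [opNorm, hw'] using
          (toEuclideanCLM (𝕜 := ℝ) (vecMulVec v v - vecMulVec w w)).le_opNorm (toLp 2 w)

theorem abs_div_sub_div_le {a b a' b' : ℝ} (hb : b ≠ 0) (hb' : b' ≠ 0) :
    |a / b - a' / b'| ≤ (|a - a'| * |b'| + |a'| * |b - b'|) / (|b| * |b'|) := by
  rw [div_sub_div _ _ hb hb', abs_div, abs_mul]
  gcongr
  calc |a * b' - b * a'| = |(a - a') * b' + a' * (b' - b)| := by ring_nf
    _ ≤ |a - a'| * |b'| + |a'| * |b - b'| := by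
      grw [abs_add_le, abs_mul, abs_mul, abs_sub_comm b']

theorem component_ratio_perturbation_general {N : ℕ} (v w : Fin N → ℝ) (i j : Fin N)
    (m ε : ℝ)
    (hv : ∑ k, v k ^ 2 = 1) (hw : ∑ k, w k ^ 2 = 1)
    (hε0 : 0 ≤ ε)
    (hclose : opNorm (Matrix.vecMulVec v v - Matrix.vecMulVec w w) ≤ ε)
    (hm : 0 < m) (hwj : m ≤ |w j|) (hwi : |w i| ≤ 1)
    (hsign : 0 ≤ ∑ k, v k * w k)
    (hvj : m / 2 ≤ |v j|) :
    |v i / v j - w i / w j| ≤ 8 * ε / m ^ 2 := by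
  have hcomp (k : Fin N) : |v k - w k| ≤ 2 * ε :=
    calc |v k - w k| = ‖(toLp 2 v - toLp 2 w) k‖ := rfl
      _ ≤ ‖toLp 2 v - toLp 2 w‖ := PiLp.norm_apply_le _ k
      _ ≤ √2 * ε := (norm_toLp_sub_le_sqrt_two_mul_opNorm hv hw hsign).trans (by gcongr)
      _ ≤ 2 * ε := by gcongr; exact Real.sqrt_le_iff.mpr ⟨zero_le_two, by norm_num⟩
  have hwj_le : |w j| ≤ 1 := by
    simpa [EuclideanSpace.norm_toLp_eq_one hw] using PiLp.norm_apply_le (toLp 2 w) j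
  calc |v i / v j - w i / w j|
      ≤ (|v i - w i| * |w j| + |w i| * |v j - w j|) / (|v j| * |w j|) :=
        abs_div_sub_div_le (abs_pos.mp (by linarith)) (abs_pos.mp (by linarith))
    _ ≤ (2 * ε * 1 + 1 * (2 * ε)) / (m / 2 * m) := by gcongr; exacts [hcomp i, hcomp j]
    _ = 8 * ε / m ^ 2 := by field_simp; ring

/-- Quantitative component-ratio stability: if the rank-one projections of unit
vectors `v, w` are `ε`-close in operator norm (`ε < 1/2`), the signs are aligned
(`⟨v,w⟩ ≥ 0`), `|w j| ≥ m > 0`, `|w i| ≤ 1` and `|v j| ≥ m/2`, then the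
component ratios satisfy `|v i / v j - w i / w j| ≤ 8 ε / m²`. -/
theorem component_ratio_perturbation {N : ℕ} (v w : Fin N → ℝ) (i j : Fin N)
    (m ε : ℝ)
    (hv : ∑ k, v k ^ 2 = 1) (hw : ∑ k, w k ^ 2 = 1)
    (hε0 : 0 ≤ ε) (hε : ε < 1/2)
    (hclose : opNorm (Matrix.vecMulVec v v - Matrix.vecMulVec w w) ≤ ε)
    (hm : 0 < m) (hwj : m ≤ |w j|) (hwi : |w i| ≤ 1)
    (hsign : 0 ≤ ∑ k, v k * w k)
    (hvj : m / 2 ≤ |v j|) :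
    |v i / v j - w i / w j| ≤ 8 * ε / m ^ 2 :=
  component_ratio_perturbation_general v w i j m ε hv hw hε0 hclose hm hwj hwi hsign hvj
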